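/- arXiv:1106.2647 — 2 statements merged into one kernel-verified Lean document; each statement's English description precedes it below -/
import Mathlib

section
/- The formula ¬φ, where φ is the formula [X1←1](X2 = 1) ∧ [X1←1](X3 = 0) ∧ [X2←1](X3 = 1) ∧ [X2←1](X1 = 0) ∧ [X3←1](X1 = 1) ∧ [X3←1](X2 = 0), is valid with respect to the class Trec(S) of recursive causal models, for any signature S whose endogenous variables are V = {X1, X2, X3}, each with range {0, 1}. -/
/-! ## Signatures -/

structure Signature where
  exo : Type
  endo : Type
  exoFin : Fintype exo
  endoFin : Fintype endo
  endoDec : DecidableEq endo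
  exoRange : exo → Type
  range : endo → Type
  exoRangeFin : ∀ u, Fintype (exoRange u)
  rangeFin : ∀ X, Fintype (range X)
  exoRangeNe : ∀ u, Nonempty (exoRange u)
  rangeNe : ∀ X, Nonempty (range X)

attribute [instance] Signature.exoFin Signature.endoFin Signature.endoDec
  Signature.exoRangeFin Signature.rangeFin Signature.exoRangeNe Signature.rangeNe

/-- A context: an assignment of values to the exogenous variables. -/
abbrev Signature.Ctx (S : Signature) : Type := ∀ u : S.exo, S.exoRange u

/-- An assignment of values to the endogenous variables. -/
abbrev Signature.Asgn (S : Signature) : Type := ∀ X : S.endo, S.range X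

/-- An intervention `Y⃗ ← y⃗`: a partial assignment of values to (distinct)
endogenous variables. -/
abbrev Signature.Intervention (S : Signature) : Type := ∀ X : S.endo, Option (S.range X)

/-- The primitive propositions Φ_S : propositions `X = x` for `X ∈ V`, `x ∈ R(X)`. -/
abbrev Signature.Atom (S : Signature) : Type := Σ X : S.endo, S.range X

/-! ## Counterfactual structures -/

/-- A counterfactual structure over the primitive propositions `Φ`:
a finite set of worlds, a valuation, and a ternary relation `R`,
where `R w u v` means `u ⪯_w v`. -/
structure CStruct (Φ : Type) where
  World : Type
  worldFin : Fintype World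
  val : World → Φ → Prop
  R : World → World → World → Prop
  self_mem : ∀ w, ∃ v, R w w v
  refl_on : ∀ w u, (∃ v, R w u v) → R w u u
  trans_on : ∀ w u v x, (∃ y, R w u y) → (∃ y, R w v y) → (∃ y, R w x y) →
    R w u v → R w v x → R w u x
  centered : ∀ w u, u ≠ w → (R w w u ∧ ¬ R w u w)

attribute [instance] CStruct.worldFin

namespace CStruct

variable {Φ : Type} (M : CStruct Φ)

/-- `u ∈ W_w` : `u ⪯_w v` for some `v`. -/
def inW (w u : M.World) : Prop := ∃ v, M.R w u v

/-- `u ≺_w v` : `u ⪯_w v` and not `v ⪯_w u`. -/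
def lt (w u v : M.World) : Prop := M.R w u v ∧ ¬ M.R w v u

/-- The set of worlds in `W_w` satisfying `A` that are closest to `w`. -/
def closest (w : M.World) (A : M.World → Prop) : Set M.World :=
  {v | M.inW w v ∧ A v ∧ ∀ v', A v' → ¬ M.lt w v' v}

/-- `(M,w) ⊨ A > B` : every closest world to `w` satisfying `A` satisfies `B`. -/
def cfSat (w : M.World) (A B : M.World → Prop) : Prop :=
  ∀ v ∈ M.closest w A, B v

/-- Membership in `M⁺`: each `≺_w` is a strict total order on `W_w`. -/
def totalOrd : Prop :=
  ∀ w u v, M.inW w u → M.inW w v → u ≠ v → M.lt w u v ∨ M.lt w v u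

end CStruct

/-! ## Acceptable and full structures over Φ_S -/

/-- At every world, for each variable `X` exactly one proposition `X = x` is true. -/
def Acceptable (S : Signature) (M : CStruct S.Atom) : Prop :=
  ∀ (w : M.World) (X : S.endo), ∃! x : S.range X, M.val w ⟨X, x⟩

/-- Every assignment of values to the endogenous variables is realized at some
world of `W_w`, for every world `w`. -/
def Full (S : Signature) (M : CStruct S.Atom) : Prop :=
  ∀ (w : M.World) (a : S.Asgn), ∃ v, M.inW w v ∧ ∀ X : S.endo, M.val v ⟨X, a X⟩

/-- The antecedent `Y⃗ = y⃗` (a conjunction of atoms) of the counterfactual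
corresponding to the intervention `g`, as a predicate on worlds. -/
def intAnte (S : Signature) (M : CStruct S.Atom) (g : S.Intervention) :
    M.World → Prop :=
  fun v => ∀ (Y : S.endo) (y : S.range Y), g Y = some y → M.val v ⟨Y, y⟩

/-- `(M,w) ⊨ [Y⃗ ← y⃗](X = x)`, read as the counterfactual
`(Y₁ = y₁ ∧ ... ∧ Y_k = y_k) > (X = x)`. -/
def satBasic (S : Signature) (M : CStruct S.Atom) (w : M.World)
    (g : S.Intervention) (X : S.endo) (x : S.range X) : Prop :=
  M.cfSat w (intAnte S M g) (fun v => M.val v ⟨X, x⟩)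

/-- Recursive counterfactual structures `Mrec(Φ_S)`: full acceptable structures in
`M⁺` such that for each world there is a strict total order `≺` on the endogenous
variables such that if `W' ≺ Y` then setting `Y` (in addition to `X⃗`) does not
change the value of `W'` at the closest world. -/
def MRec (S : Signature) (M : CStruct S.Atom) : Prop :=
  Acceptable S M ∧ Full S M ∧ M.totalOrd ∧
  ∀ w : M.World, ∃ vlt : S.endo → S.endo → Prop, IsStrictTotalOrder S.endo vlt ∧
    ∀ W' Y : S.endo, vlt W' Y →
      ∀ g : S.Intervention, g W' = none → g Y = none →
        ∀ (y : S.range Y) (w' : S.range W'),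
          (satBasic S M w (Function.update g Y (some y)) W' w' ↔ satBasic S M w g W' w')

/-! ## Causal models -/

/-- A causal model over `S`: for each endogenous variable `X`, a structural
equation `F_X` mapping the values of all the other variables to a value of `X`. -/
structure CausalModel (S : Signature) where
  F : ∀ X : S.endo, S.Ctx → (∀ Y : {Y : S.endo // Y ≠ X}, S.range Y.1) → S.range X

namespace CausalModel

variable {S : Signature}

/-- `a` is a solution of the equations of `T_{g}` in context `u`. -/
def isSolution (T : CausalModel S) (g : S.Intervention) (u : S.Ctx) (a : S.Asgn) : Prop :=
  ∀ X : S.endo,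
    (∀ x : S.range X, g X = some x → a X = x) ∧
    (g X = none → a X = T.F X u (fun Y => a Y.1))

/-- `T` is recursive (acyclic): membership in `Trec(S)`. -/
def Recursive (T : CausalModel S) : Prop :=
  ∃ vlt : S.endo → S.endo → Prop, IsStrictTotalOrder S.endo vlt ∧
    ∀ X Y : S.endo, vlt X Y →
      ∀ (u : S.Ctx) (a a' : ∀ Z : {Z : S.endo // Z ≠ X}, S.range Z.1),
        (∀ Z : {Z : S.endo // Z ≠ X}, Z.1 ≠ Y → a Z = a' Z) →
        T.F X u a = T.F X u a'

/-- Membership in `Tun(S)`: all the equations of every `T_{X⃗ ← x⃗}` have a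
unique solution in every context. -/
def UniqueSolutions (T : CausalModel S) : Prop :=
  ∀ (g : S.Intervention) (u : S.Ctx), ∃! a : S.Asgn, T.isSolution g u a

end CausalModel

/-! ## The language Lprop(S) -/

/-- `Lprop(S)`: Boolean combinations of basic formulas `[Y⃗ ← y⃗](X = x)`. -/
inductive LProp (S : Signature) : Type
  | basic (g : S.Intervention) (X : S.endo) (x : S.range X) : LProp S
  | neg : LProp S → LProp S
  | and : LProp S → LProp S → LProp S

/-- Satisfaction of `Lprop(S)` formulas in a causal model, relative to a context. -/
def CausalModel.sat {S : Signature} (T : CausalModel S) (u : S.Ctx) : LProp S → Prop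
  | .basic g X x => ∀ a : S.Asgn, T.isSolution g u a → a X = x
  | .neg φ => ¬ CausalModel.sat T u φ
  | .and φ ψ => CausalModel.sat T u φ ∧ CausalModel.sat T u ψ

/-- Satisfaction of `Lprop(S)` formulas in a counterfactual structure over `Φ_S`. -/
def satL {S : Signature} (M : CStruct S.Atom) (w : M.World) : LProp S → Prop
  | .basic g X x => satBasic S M w g X x
  | .neg φ => ¬ satL M w φ
  | .and φ ψ => satL M w φ ∧ satL M w ψ

namespace LProp

variable {S : Signature}

def imp (φ ψ : LProp S) : LProp S := .neg (.and φ (.neg ψ))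

def or (φ ψ : LProp S) : LProp S := .neg (.and (.neg φ) (.neg ψ))

/-- Boolean evaluation of a formula treating the basic formulas as atoms. -/
def evalB (v : LProp S → Prop) : LProp S → Prop
  | .neg φ => ¬ evalB v φ
  | .and φ ψ => evalB v φ ∧ evalB v ψ
  | .basic g X x => v (.basic g X x)

/-- Instances of propositional tautologies in `Lprop(S)`. -/
def Taut (φ : LProp S) : Prop := ∀ v : LProp S → Prop, evalB v φ

/-- Disjunction of a nonempty list of formulas. -/
def bigOrNe : LProp S → List (LProp S) → LProp S
  | φ, [] => φ
  | φ, ψ :: l => or φ (bigOrNe ψ l)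

end LProp

/-- The proof system AXun(S): C0 (propositional tautologies), C1 (equality),
C2 (definiteness), C3 (composition), C4 (effectiveness), C5 (reversibility),
with modus ponens. -/
inductive AXunProv (S : Signature) : LProp S → Prop
  | taut {φ : LProp S} : LProp.Taut φ → AXunProv S φ
  | c1 (g : S.Intervention) (X : S.endo) (x x' : S.range X) (h : x ≠ x') :
      AXunProv S (LProp.imp (.basic g X x) (.neg (.basic g X x')))
  | c2 (g : S.Intervention) (X : S.endo) (x0 : S.range X) (l : List (S.range X))
      (h : x0 :: l = (Finset.univ : Finset (S.range X)).toList) :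
      AXunProv S (LProp.bigOrNe (.basic g X x0) (l.map (fun x => LProp.basic g X x)))
  | c3 (g : S.Intervention) (W : S.endo) (w : S.range W) (Y : S.endo) (y : S.range Y)
      (hW : g W = none) :
      AXunProv S (LProp.imp (.and (.basic g W w) (.basic g Y y))
        (.basic (Function.update g W (some w)) Y y))
  | c4 (g : S.Intervention) (X : S.endo) (x : S.range X) (h : g X = some x) :
      AXunProv S (.basic g X x)
  | c5 (g : S.Intervention) (W : S.endo) (w : S.range W) (Y : S.endo) (y : S.range Y)
      (hne : Y ≠ W) (hW : g W = none) (hY : g Y = none) :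
      AXunProv S (LProp.imp
        (.and (.basic (Function.update g W (some w)) Y y)
              (.basic (Function.update g Y (some y)) W w))
        (.basic g Y y))
  | mp {φ ψ : LProp S} : AXunProv S (LProp.imp φ ψ) → AXunProv S φ → AXunProv S ψ

/-! ## The language Lex(S) -/

/-- Boolean combinations of atoms `X = x`. -/
inductive BForm (S : Signature) : Type
  | atom (X : S.endo) (x : S.range X) : BForm S
  | neg : BForm S → BForm S
  | and : BForm S → BForm S → BForm S

def BForm.holds {S : Signature} (a : S.Asgn) : BForm S → Prop
  | .atom X x => a X = x
  | .neg φ => ¬ BForm.holds a φ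
  | .and φ ψ => BForm.holds a φ ∧ BForm.holds a ψ

/-- `Lex(S)`: Boolean combinations of basic formulas `[Y⃗ ← y⃗]ψ`, where `ψ` is a
Boolean combination of atoms. -/
inductive LEx (S : Signature) : Type
  | basic (g : S.Intervention) (ψ : BForm S) : LEx S
  | neg : LEx S → LEx S
  | and : LEx S → LEx S → LEx S

/-- Satisfaction of `Lex(S)` formulas in a causal model, relative to a context. -/
def CausalModel.satEx {S : Signature} (T : CausalModel S) (u : S.Ctx) : LEx S → Prop
  | .basic g ψ => ∀ a : S.Asgn, T.isSolution g u a → ψ.holds a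
  | .neg φ => ¬ CausalModel.satEx T u φ
  | .and φ ψ => CausalModel.satEx T u φ ∧ CausalModel.satEx T u ψ

/-! ## The counterfactual language L^C(Φ) and the system AX -/

/-- The language `L^C(Φ)`: primitive propositions closed under `∧`, `¬` and the
counterfactual connective `>` (`cf`). -/
inductive CForm (Φ : Type) : Type
  | atom : Φ → CForm Φ
  | fls : CForm Φ
  | neg : CForm Φ → CForm Φ
  | and : CForm Φ → CForm Φ → CForm Φ
  | cf : CForm Φ → CForm Φ → CForm Φ

namespace CForm

variable {Φ : Type}

def tr : CForm Φ := neg fls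

def or (φ ψ : CForm Φ) : CForm Φ := neg (and (neg φ) (neg ψ))

def imp (φ ψ : CForm Φ) : CForm Φ := or (neg φ) ψ

def iff (φ ψ : CForm Φ) : CForm Φ := and (imp φ ψ) (imp ψ φ)

/-- Boolean evaluation treating atoms and counterfactuals as atomic. -/
def evalB (v : CForm Φ → Prop) : CForm Φ → Prop
  | fls => False
  | neg φ => ¬ evalB v φ
  | and φ ψ => evalB v φ ∧ evalB v ψ
  | atom p => v (atom p)
  | cf φ ψ => v (cf φ ψ)

/-- Instances of propositional tautologies in `L^C(Φ)`. -/
def Taut (φ : CForm Φ) : Prop := ∀ v : CForm Φ → Prop, evalB v φ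

def bigAnd : List (CForm Φ) → CForm Φ
  | [] => tr
  | [φ] => φ
  | φ :: l => and φ (bigAnd l)

def bigOr : List (CForm Φ) → CForm Φ
  | [] => fls
  | [φ] => φ
  | φ :: l => or φ (bigOr l)

end CForm

/-- Provability in the system AX (axioms A0–A6, rules MP, RA1, RA2), augmented
with an arbitrary set `extra` of additional axioms. -/
inductive AXProv (Φ : Type) (extra : CForm Φ → Prop) : CForm Φ → Prop
  | taut {φ} : CForm.Taut φ → AXProv Φ extra φ
  | ax {φ} : extra φ → AXProv Φ extra φ
  | a1 (φ) : AXProv Φ extra (CForm.cf φ φ)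
  | a2 (φ ψ1 ψ2) : AXProv Φ extra
      (CForm.imp (CForm.and (CForm.cf φ ψ1) (CForm.cf φ ψ2)) (CForm.cf φ (CForm.and ψ1 ψ2)))
  | a3 (φ1 φ2 ψ) : AXProv Φ extra
      (CForm.imp (CForm.and (CForm.cf φ1 φ2) (CForm.cf φ1 ψ)) (CForm.cf (CForm.and φ1 φ2) ψ))
  | a4 (φ1 φ2 ψ) : AXProv Φ extra
      (CForm.imp (CForm.and (CForm.cf φ1 ψ) (CForm.cf φ2 ψ)) (CForm.cf (CForm.or φ1 φ2) ψ))
  | a5 : AXProv Φ extra (CForm.neg (CForm.cf CForm.tr CForm.fls))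
  | a6 (φ ψ) : AXProv Φ extra (CForm.imp φ (CForm.iff ψ (CForm.cf φ ψ)))
  | mp {φ ψ} : AXProv Φ extra (CForm.imp φ ψ) → AXProv Φ extra φ → AXProv Φ extra ψ
  | ra1 {φ φ' ψ} : AXProv Φ extra (CForm.iff φ φ') →
      AXProv Φ extra (CForm.imp (CForm.cf φ ψ) (CForm.cf φ' ψ))
  | ra2 {ψ ψ' φ} : AXProv Φ extra (CForm.imp ψ ψ') →
      AXProv Φ extra (CForm.imp (CForm.cf φ ψ) (CForm.cf φ ψ'))

/-- The axiom scheme A7. -/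
def A7Scheme (Φ : Type) : CForm Φ → Prop := fun θ =>
  ∃ φ ψ1 ψ2 : CForm Φ, θ = CForm.imp (CForm.cf φ (CForm.or ψ1 ψ2))
    (CForm.or (CForm.cf φ ψ1) (CForm.cf φ ψ2))

/-- Satisfaction of `L^C(Φ)` formulas in a counterfactual structure. -/
def CStruct.satC {Φ : Type} (M : CStruct Φ) : M.World → CForm Φ → Prop
  | w, .atom p => M.val w p
  | _, .fls => False
  | w, .neg φ => ¬ CStruct.satC M w φ
  | w, .and φ ψ => CStruct.satC M w φ ∧ CStruct.satC M w ψ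
  | w, .cf φ ψ => ∀ v ∈ M.closest w (fun u => CStruct.satC M u φ), CStruct.satC M v ψ

/-! ## The signature with three binary endogenous variables -/

/-- The signature with endogenous variables `V = {X1, X2, X3}` (as `Fin 3`), each
with range `{0, 1}` (as `Fin 2`), and an arbitrary exogenous part. -/
abbrev S3 (E : Type) (eF : Fintype E) (er : E → Type)
    (erF : ∀ e, Fintype (er e)) (erN : ∀ e, Nonempty (er e)) : Signature :=
  { exo := E
    endo := Fin 3
    exoFin := eF
    endoFin := inferInstance
    endoDec := inferInstance
    exoRange := er
    range := fun _ => Fin 2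
    exoRangeFin := erF
    rangeFin := fun _ => inferInstance
    exoRangeNe := erN
    rangeNe := fun _ => ⟨0⟩ }

/-- The intervention `Xi ← 1`. -/
def gI {E : Type} {eF : Fintype E} {er : E → Type}
    {erF : ∀ e, Fintype (er e)} {erN : ∀ e, Nonempty (er e)}
    (i : Fin 3) : (S3 E eF er erF erN).Intervention :=
  fun j => if j = i then some (1 : Fin 2) else none

/-- The intervention `Xi ← 1; Xj ← 1`. -/
def gII {E : Type} {eF : Fintype E} {er : E → Type}
    {erF : ∀ e, Fintype (er e)} {erN : ∀ e, Nonempty (er e)}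
    (i j : Fin 3) : (S3 E eF er erF erN).Intervention :=
  fun k => if k = i ∨ k = j then some (1 : Fin 2) else none

/-- The formula φ : `[X1←1](X2 = 1) ∧ [X1←1](X3 = 0) ∧ [X2←1](X3 = 1) ∧
[X2←1](X1 = 0) ∧ [X3←1](X1 = 1) ∧ [X3←1](X2 = 0)`. -/
def phi3 {E : Type} {eF : Fintype E} {er : E → Type}
    {erF : ∀ e, Fintype (er e)} {erN : ∀ e, Nonempty (er e)} :
    LProp (S3 E eF er erF erN) :=
  .and (.basic (gI 0) 1 1) <| .and (.basic (gI 0) 2 0) <| .and (.basic (gI 1) 2 1) <|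
    .and (.basic (gI 1) 0 0) <| .and (.basic (gI 2) 0 1) (.basic (gI 2) 1 0)


/-! Let `X` be the least variable in the recursion order of `T`. Its equation can read no other
variable, so `X` takes one and the same value in every solution of every intervention that does
not set `X`; as recursive models always have solutions, `[g](X = x)` and `[g'](X = x')` force
`x = x'`. Whichever of `X1, X2, X3` is least, `φ` gives it the values `0` and `1` under two
interventions on the other variables. -/

theorem Function.eq_of_forall_update_invariant {ι γ : Type*} {β : ι → Type*} [DecidableEq ι]
    (f : (∀ i, β i) → γ) (s : Finset ι)
    (hf : ∀ i ∈ s, ∀ a a' : ∀ i, β i, (∀ j, j ≠ i → a j = a' j) → f a = f a')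
    {a a' : ∀ i, β i} (h : ∀ j ∉ s, a j = a' j) : f a = f a' := by
  induction s using Finset.induction_on generalizing a with
  | empty => exact congrArg f (funext fun j => h j (Finset.notMem_empty j))
  | insert i s _ ih =>
    calc f a = f (Function.update a i (a' i)) :=
          hf i (Finset.mem_insert_self i s) _ _ fun j hj => (Function.update_of_ne hj _ _).symm
      _ = f a' := by
          refine ih (fun k hk => hf k (Finset.mem_insert_of_mem hk)) fun j hj => ?_
          rcases eq_or_ne j i with rfl | hji
          · exact Function.update_self ..
          · rw [Function.update_of_ne hji]
            exact h j (by simp [hji, hj])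

namespace CausalModel

variable {S : Signature}

/-- `T.Recursive` unfolds to `∃ lt, IsStrictTotalOrder S.endo lt ∧ T.RespectsOrder lt`. -/
def RespectsOrder (T : CausalModel S) (lt : S.endo → S.endo → Prop) : Prop :=
  ∀ X Y : S.endo, lt X Y →
    ∀ (u : S.Ctx) (a a' : ∀ Z : {Z : S.endo // Z ≠ X}, S.range Z.1),
      (∀ Z : {Z : S.endo // Z ≠ X}, Z.1 ≠ Y → a Z = a' Z) →
      T.F X u a = T.F X u a'

namespace RespectsOrder

variable {T : CausalModel S} {lt : S.endo → S.endo → Prop}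

theorem F_congr [Std.Trichotomous lt] (hT : T.RespectsOrder lt) (X : S.endo) (u : S.Ctx)
    {a a' : ∀ Z : {Z : S.endo // Z ≠ X}, S.range Z.1}
    (h : ∀ Z : {Z : S.endo // Z ≠ X}, lt Z.1 X → a Z = a' Z) :
    T.F X u a = T.F X u a' := by
  classical
  refine Function.eq_of_forall_update_invariant (T.F X u)
    (Finset.univ.filter fun Z => lt X Z.1) (fun Y hY b b' hb => ?_) (fun Z hZ => ?_)
  · exact hT X Y.1 (Finset.mem_filter.1 hY).2 u b b' fun Z hZ => hb Z (Subtype.coe_ne_coe.1 hZ)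
  · refine h Z ?_
    rcases trichotomous_of lt Z.1 X with hlt | heq | hgt
    · exact hlt
    · exact absurd heq Z.2
    · simp [hgt] at hZ

/-- The solution is built by well-founded recursion along `lt`, each variable reading only
the values of its predecessors. -/
theorem exists_isSolution [IsStrictTotalOrder S.endo lt]
    (hT : T.RespectsOrder lt) (g : S.Intervention) (u : S.Ctx) :
    ∃ a : S.Asgn, T.isSolution g u a := by
  classical
  have wf : WellFounded lt := Finite.wellFounded_of_trans_of_irrefl lt
  let step (X : S.endo) (prev : ∀ Y, lt Y X → S.range Y) : S.range X :=
    (g X).getD (T.F X u fun Z => if hZ : lt Z.1 X then prev Z.1 hZ else Classical.arbitrary _)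
  refine ⟨wf.fix step, fun X => ⟨fun x hx => ?_, fun hX => ?_⟩⟩
  · rw [wf.fix_eq]
    simp only [step, hx, Option.getD_some]
  · rw [wf.fix_eq]
    simp only [step, hX, Option.getD_none]
    exact hT.F_congr X u fun Z hZ => dif_pos hZ

theorem isSolution_apply_eq_of_minimal [Std.Trichotomous lt] (hT : T.RespectsOrder lt)
    {X : S.endo} (hX : ∀ Y, ¬ lt Y X) {u : S.Ctx} {g g' : S.Intervention}
    (hg : g X = none) (hg' : g' X = none) {a b : S.Asgn}
    (ha : T.isSolution g u a) (hb : T.isSolution g' u b) : a X = b X := by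
  rw [(ha X).2 hg, (hb X).2 hg']
  exact hT.F_congr X u fun Z hZ => absurd hZ (hX Z.1)

theorem eq_of_sat_basic_of_minimal [IsStrictTotalOrder S.endo lt]
    (hT : T.RespectsOrder lt) {X : S.endo} (hX : ∀ Y, ¬ lt Y X) {u : S.Ctx}
    {g g' : S.Intervention} (hg : g X = none) (hg' : g' X = none) {x x' : S.range X}
    (h : T.sat u (.basic g X x)) (h' : T.sat u (.basic g' X x')) : x = x' := by
  obtain ⟨a, ha⟩ := hT.exists_isSolution g u
  obtain ⟨b, hb⟩ := hT.exists_isSolution g' u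
  rw [← h a ha, ← h' b hb]
  exact hT.isSolution_apply_eq_of_minimal hX hg hg' ha hb

end RespectsOrder

end CausalModel

/-- `¬φ`, where `φ` is
`[X1←1](X2=1) ∧ [X1←1](X3=0) ∧ [X2←1](X3=1) ∧ [X2←1](X1=0) ∧ [X3←1](X1=1) ∧
[X3←1](X2=0)`, is valid with respect to `Trec(S)` for any signature `S` with
endogenous variables `{X1, X2, X3}`, each with range `{0, 1}`. -/
theorem stmt10 (E : Type) (eF : Fintype E) (er : E → Type)
    (erF : ∀ e, Fintype (er e)) (erN : ∀ e, Nonempty (er e))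
    (T : CausalModel (S3 E eF er erF erN)) (hT : T.Recursive)
    (u : (S3 E eF er erF erN).Ctx) :
    T.sat u (.neg phi3) := by
  rintro ⟨h01, h02, h12, h10, h20, h21⟩
  obtain ⟨lt, hlt, hT⟩ := hT
  obtain ⟨p, -, hp⟩ := (Finite.wellFounded_of_trans_of_irrefl lt).has_min Set.univ ⟨0, trivial⟩
  have key {i j : Fin 3} {x x' : Fin 2} (hi : gI i p = none) (hj : gI j p = none)
      (h : T.sat u (.basic (gI i) p x)) (h' : T.sat u (.basic (gI j) p x')) : x = x' :=
    CausalModel.RespectsOrder.eq_of_sat_basic_of_minimal hT (fun Y => hp Y trivial) hi hj h h'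
  fin_cases p
  · exact absurd (key rfl rfl h10 h20) (by simp)
  · exact absurd (key rfl rfl h01 h21) (by simp)
  · exact absurd (key rfl rfl h02 h12) (by simp)
end

section
/- The axiom system AXun(S) is sound for the language Lprop(S) with respect to the class Tun(S): every formula of Lprop(S) provable in AXun(S) is valid with respect to Tun(S). -/
namespace CausalModel

variable {S : Signature} {T : CausalModel S} {u : S.Ctx}

lemma sat_imp {φ ψ : LProp S} : T.sat u (φ.imp ψ) ↔ (T.sat u φ → T.sat u ψ) := by
  simp only [LProp.imp, sat]
  tauto

lemma sat_or {φ ψ : LProp S} : T.sat u (φ.or ψ) ↔ (T.sat u φ ∨ T.sat u ψ) := by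
  simp only [LProp.or, sat]
  tauto

lemma sat_bigOrNe (φ : LProp S) (l : List (LProp S)) :
    T.sat u (LProp.bigOrNe φ l) ↔ ∃ ψ ∈ φ :: l, T.sat u ψ := by
  induction l generalizing φ with
  | nil => simp [LProp.bigOrNe]
  | cons ψ l ih => simp [LProp.bigOrNe, sat_or, ih]

lemma evalB_sat (φ : LProp S) : φ.evalB (T.sat u) ↔ T.sat u φ := by
  induction φ <;> simp [LProp.evalB, sat, *]

lemma sat_of_taut {φ : LProp S} (h : φ.Taut) : T.sat u φ :=
  (evalB_sat φ).1 (h _)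

-- The equations of `T_g` constrain each variable separately.
lemma isSolution_of_forall_eq_or_eq {g g₁ g₂ : S.Intervention} {a : S.Asgn}
    (h₁ : T.isSolution g₁ u a) (h₂ : T.isSolution g₂ u a)
    (h : ∀ X, g X = g₁ X ∨ g X = g₂ X) :
    T.isSolution g u a := by
  intro X
  rcases h X with e | e
  · rw [e]; exact h₁ X
  · rw [e]; exact h₂ X

lemma isSolution_update {g : S.Intervention} {a : S.Asgn} {W : S.endo} {w : S.range W}
    (ha : T.isSolution g u a) (hw : a W = w) :
    T.isSolution (Function.update g W (some w)) u a := by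
  intro X
  by_cases hX : X = W
  · subst hX
    simp only [Function.update_self, Option.some.injEq, reduceCtorEq, false_implies, and_true]
    rintro x rfl
    exact hw
  · rw [Function.update_of_ne hX]
    exact ha X

lemma isSolution_of_isSolution_update_of_isSolution_update {g : S.Intervention} {a : S.Asgn}
    {W Y : S.endo} {w : Option (S.range W)} {y : Option (S.range Y)} (hne : Y ≠ W)
    (hW : T.isSolution (Function.update g W w) u a)
    (hY : T.isSolution (Function.update g Y y) u a) :
    T.isSolution g u a := by
  refine isSolution_of_forall_eq_or_eq hW hY fun X => ?_
  by_cases hX : X = W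
  · subst hX
    exact Or.inr (Function.update_of_ne (Ne.symm hne) _ _).symm
  · exact Or.inl (Function.update_of_ne hX _ _).symm

lemma sat_effectiveness {g : S.Intervention} {X : S.endo} {x : S.range X} (hx : g X = some x) :
    T.sat u (.basic g X x) :=
  fun _ ha => (ha X).1 x hx

lemma sat_basic_iff (hT : T.UniqueSolutions) {g : S.Intervention} {a : S.Asgn}
    (ha : T.isSolution g u a) {X : S.endo} {x : S.range X} :
    T.sat u (.basic g X x) ↔ a X = x := by
  refine ⟨fun h => h a ha, fun hx b hb => ?_⟩
  rw [(hT g u).unique hb ha, hx]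

lemma sat_equality (hT : T.UniqueSolutions) (g : S.Intervention) (X : S.endo)
    {x x' : S.range X} (hne : x ≠ x') :
    T.sat u (LProp.imp (.basic g X x) (.neg (.basic g X x'))) := by
  obtain ⟨a, ha, -⟩ := hT g u
  rw [sat_imp, sat_basic_iff hT ha]
  exact fun hx hx' => hne (hx.symm.trans ((sat_basic_iff hT ha).1 hx'))

lemma sat_definiteness (hT : T.UniqueSolutions) (g : S.Intervention) (X : S.endo)
    {x₀ : S.range X} {l : List (S.range X)}
    (hl : x₀ :: l = (Finset.univ : Finset (S.range X)).toList) :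
    T.sat u (LProp.bigOrNe (.basic g X x₀) (l.map fun x => LProp.basic g X x)) := by
  obtain ⟨a, ha, -⟩ := hT g u
  have hmem : a X ∈ x₀ :: l := hl ▸ Finset.mem_toList.2 (Finset.mem_univ _)
  rw [sat_bigOrNe, ← List.map_cons]
  exact ⟨_, List.mem_map_of_mem hmem, (sat_basic_iff hT ha).2 rfl⟩

lemma sat_composition (hT : T.UniqueSolutions) (g : S.Intervention) {W Y : S.endo}
    (w : S.range W) (y : S.range Y) :
    T.sat u (LProp.imp (.and (.basic g W w) (.basic g Y y))
      (.basic (Function.update g W (some w)) Y y)) := by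
  obtain ⟨a, ha, -⟩ := hT g u
  rw [sat_imp]
  rintro ⟨hw, hy⟩
  rw [sat_basic_iff hT ha] at hw hy
  exact (sat_basic_iff hT (isSolution_update ha hw)).2 hy

/- The solutions `s` of `T_{g[W←w]}` and `t` of `T_{g[Y←y]}` both solve `T_{g[W←w][Y←y]}`,
so they coincide, and a common solution of `T_{g[W←w]}` and `T_{g[Y←y]}` solves `T_g`. -/
lemma sat_reversibility (hT : T.UniqueSolutions) (g : S.Intervention) {W Y : S.endo}
    (w : S.range W) (y : S.range Y) (hne : Y ≠ W) :
    T.sat u (LProp.imp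
      (.and (.basic (Function.update g W (some w)) Y y) (.basic (Function.update g Y (some y)) W w))
      (.basic g Y y)) := by
  obtain ⟨s, hs, -⟩ := hT (Function.update g W (some w)) u
  obtain ⟨t, ht, -⟩ := hT (Function.update g Y (some y)) u
  rw [sat_imp]
  rintro ⟨hsy, htw⟩
  rw [sat_basic_iff hT hs] at hsy
  rw [sat_basic_iff hT ht] at htw
  have hst : s = t := by
    have hs' := isSolution_update hs hsy
    have ht' := isSolution_update ht htw
    rw [Function.update_comm hne] at ht'
    exact (hT _ u).unique hs' ht'
  subst hst
  exact (sat_basic_iff hT (isSolution_of_isSolution_update_of_isSolution_update hne hs ht)).2 hsy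

end CausalModel

/-- AXun(S) is sound for `Lprop(S)` with respect to `Tun(S)`:
every provable formula is valid. -/
theorem stmt17 (S : Signature) (φ : LProp S) (h : AXunProv S φ) :
    ∀ T : CausalModel S, T.UniqueSolutions → ∀ u : S.Ctx, T.sat u φ := by
  induction h with
  | taut ht => exact fun T _ u => CausalModel.sat_of_taut ht
  | c1 g X x x' hne => exact fun T hT u => CausalModel.sat_equality hT g X hne
  | c2 g X x₀ l hl => exact fun T hT u => CausalModel.sat_definiteness hT g X hl
  | c3 g W w Y y => exact fun T hT u => CausalModel.sat_composition hT g w y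
  | c4 g X x hx => exact fun T _ u => CausalModel.sat_effectiveness hx
  | c5 g W w Y y hne => exact fun T hT u => CausalModel.sat_reversibility hT g w y hne
  | mp _ _ ihImp ih => exact fun T hT u => CausalModel.sat_imp.1 (ihImp T hT u) (ih T hT u)
end
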